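/- Up to isomorphism there is a unique left-resolving, predecessor-separated, ι-irreducible, λ-synchronizing λ-graph system presenting a given λ-synchronizing subshift Λ, namely the canonical λ-synchronizing λ-graph system 𝔏^{λ(Λ)}. -/

import Mathlib

open List

variable {A : Type*}

/-- A subshift: a closed, shift-invariant subset of `A^ℤ` (with `A` discrete). -/
def IsSubshift [TopologicalSpace A] (Λ : Set (ℤ → A)) : Prop :=
  IsClosed Λ ∧ (∀ x ∈ Λ, (fun i => x (i + 1)) ∈ Λ) ∧ (∀ x ∈ Λ, (fun i => x (i - 1)) ∈ Λ)

/-- `w` is an admissible word of `Λ`, i.e. `w ∈ B_*(Λ)`. -/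
def Adm (Λ : Set (ℤ → A)) (w : List A) : Prop :=
  ∃ x ∈ Λ, ∃ n : ℤ, ∀ i : Fin w.length, x (n + (i : ℕ)) = w.get i

/-- `Γ_l^-(μ)`: the set of admissible words `ν` of length `l` with `νμ` admissible. -/
def Gamma (Λ : Set (ℤ → A)) (l : ℕ) (μ : List A) : Set (List A) :=
  {ν | ν.length = l ∧ Adm Λ ν ∧ Adm Λ (ν ++ μ)}

/-- `μ` is an `l`-synchronizing word of `Λ`: `Γ_l^-(μ) = Γ_l^-(μω)` for all
`ω ∈ Γ_*^+(μ)`.  Membership in `S_l(Λ)`. -/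
def LSync (Λ : Set (ℤ → A)) (l : ℕ) (μ : List A) : Prop :=
  Adm Λ μ ∧ ∀ ω : List A, Adm Λ (μ ++ ω) → Gamma Λ l μ = Gamma Λ l (μ ++ ω)

/-- `ω` is an intrinsically synchronizing word of `Λ`. -/
def IntrSync (Λ : Set (ℤ → A)) (ω : List A) : Prop :=
  Adm Λ ω ∧ ∀ μ ν : List A, Adm Λ μ → Adm Λ ν → Adm Λ (μ ++ ω) → Adm Λ (ω ++ ν) →
    Adm Λ (μ ++ ω ++ ν)

/-- Irreducibility of the subshift `Λ`. -/
def IrredShift (Λ : Set (ℤ → A)) : Prop :=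
  ∀ μ ν : List A, Adm Λ μ → Adm Λ ν → ∃ ξ : List A, Adm Λ (μ ++ ξ ++ ν)

/-- `Λ` is `λ`-synchronizing: it is irreducible and for every `η ∈ B_l(Λ)` and `k ≥ l`
there is `ν ∈ S_k(Λ)` with `ην ∈ S_{k-l}(Λ)`. -/
def LambdaSync (Λ : Set (ℤ → A)) : Prop :=
  IrredShift Λ ∧ ∀ (η : List A) (k : ℕ), Adm Λ η → η.length ≤ k →
    ∃ ν : List A, LSync Λ k ν ∧ LSync Λ (k - η.length) (η ++ ν)

/-- A `λ`-graph system over the alphabet `A`: a labeled Bratteli diagram with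
finite vertex sets `V l` and edge sets `E l` (edges from level `l` to level `l+1`),
a labeling, and surjective `ι`-maps, satisfying the local property (stated as a
label-wise counting identity, i.e. a label-preserving bijection), such that every
vertex has a successor and every vertex at level `l+1` has a predecessor. -/
structure LGS (A : Type*) where
  V : ℕ → Type*
  E : ℕ → Type*
  finV : ∀ l, Finite (V l)
  finE : ∀ l, Finite (E l)
  src : ∀ l, E l → V l
  tgt : ∀ l, E l → V (l + 1)
  lab : ∀ l, E l → A
  iota : ∀ l, V (l + 1) → V l
  iota_surj : ∀ l, Function.Surjective (iota l)
  succ : ∀ (l : ℕ) (v : V l), ∃ e : E l, src l e = v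
  pred : ∀ (l : ℕ) (v : V (l + 1)), ∃ e : E l, tgt l e = v
  local_property : ∀ (l : ℕ) (u : V l) (v : V (l + 2)) (α : A),
    Nat.card {e : E (l + 1) //
        tgt (l + 1) e = v ∧ iota l (src (l + 1) e) = u ∧ lab (l + 1) e = α}
      = Nat.card {e : E l //
        src l e = u ∧ tgt l e = iota (l + 1) v ∧ lab l e = α}

namespace LGS

variable {A : Type*}

/-- There is a labeled path in `G` starting at `v : V l`, labeled `w`, ending at `u : V l'`. -/
def PathW (G : LGS A) : ∀ (l : ℕ), G.V l → List A → ∀ (l' : ℕ), G.V l' → Prop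
  | l, v, [], l', u => ∃ h : l = l', h ▸ v = u
  | l, v, a :: w, l', u =>
      ∃ e : G.E l, G.src l e = v ∧ G.lab l e = a ∧ G.PathW (l + 1) (G.tgt l e) w l' u

/-- `G` presents the subshift `Λ`: the admissible words of `Λ` are exactly the labels of
finite labeled paths appearing somewhere in `G`. -/
def Presents (G : LGS A) (Λ : Set (ℤ → A)) : Prop :=
  ∀ w : List A, Adm Λ w ↔ ∃ (l : ℕ) (v : G.V l) (l' : ℕ) (u : G.V l'), G.PathW l v w l' u

/-- Iterated `ι`-map `ι^n : V (l+n) → V l`. -/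
def iotaN (G : LGS A) : ∀ (l n : ℕ), G.V (l + n) → G.V l
  | _, 0, v => v
  | l, n + 1, v => G.iotaN l n (G.iota (l + n) v)

/-- `G` is left-resolving: edges carrying the same label have distinct terminal vertices. -/
def LeftResolving (G : LGS A) : Prop :=
  ∀ (l : ℕ) (e f : G.E l), G.lab l e = G.lab l f → G.tgt l e = G.tgt l f → e = f

/-- The predecessor set `Γ_l^-(v)` of a vertex `v ∈ V l`: the words of length `l`
labeling paths from level `0` to `v`. -/
def PredSet (G : LGS A) (l : ℕ) (v : G.V l) : Set (List A) :=
  {w | w.length = l ∧ ∃ v0 : G.V 0, G.PathW 0 v0 w l v}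

/-- `G` is predecessor-separated. -/
def PredSeparated (G : LGS A) : Prop :=
  ∀ (l : ℕ) (u v : G.V l), G.PredSet l u = G.PredSet l v → u = v

/-- The word `w` leaves the vertex `v`. -/
def Leaves (G : LGS A) (l : ℕ) (v : G.V l) (w : List A) : Prop :=
  ∃ (l' : ℕ) (u : G.V l'), G.PathW l v w l' u

/-- The vertex `v ∈ V l` launches the word `w`: `w` leaves `v` and no other vertex of `V l`. -/
def Launches (G : LGS A) (l : ℕ) (v : G.V l) (w : List A) : Prop :=
  G.Leaves l v w ∧ ∀ v' : G.V l, G.Leaves l v' w → v' = v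

/-- `G` is a `λ`-synchronizing `λ`-graph system: every vertex launches some word. -/
def LambdaSyncSys (G : LGS A) : Prop :=
  ∀ (l : ℕ) (v : G.V l), ∃ w : List A, G.Launches l v w

/-- `G` is `ι`-irreducible. -/
def IotaIrred (G : LGS A) : Prop :=
  ∀ (l : ℕ) (v u : G.V l) (w : List A) (l' : ℕ) (t : G.V l'),
    G.PathW l u w l' t →
    ∃ (n : ℕ) (ξ : List A) (u' : G.V (l + n)) (t' : G.V (l' + n)),
      G.PathW l v ξ (l + n) u' ∧ G.iotaN l n u' = u ∧
      G.PathW (l + n) u' w (l' + n) t' ∧ G.iotaN l' n t' = t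

end LGS

namespace LGS

variable {A : Type*}

/-- Isomorphism of `λ`-graph systems: level-preserving bijections of vertices and edges
compatible with sources, terminals, labels and `ι`-maps. -/
def Isomorphic (G G' : LGS A) : Prop :=
  ∃ (Φv : ∀ l, G.V l ≃ G'.V l) (Φe : ∀ l, G.E l ≃ G'.E l),
    (∀ (l : ℕ) (e : G.E l), G'.src l (Φe l e) = Φv l (G.src l e)) ∧
    (∀ (l : ℕ) (e : G.E l), G'.tgt l (Φe l e) = Φv (l + 1) (G.tgt l e)) ∧
    (∀ (l : ℕ) (e : G.E l), G'.lab l (Φe l e) = G.lab l e) ∧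
    (∀ (l : ℕ) (v : G.V (l + 1)), G'.iota l (Φv (l + 1) v) = Φv l (G.iota l v))

/-- The characterizing properties of the canonical `λ`-synchronizing `λ`-graph system
`𝔏^{λ(Λ)}` of a `λ`-synchronizing subshift `Λ` (Theorem 3.8 of the paper): it is the
unique left-resolving, predecessor-separated, `ι`-irreducible, `λ`-synchronizing
`λ`-graph system presenting `Λ`. -/
def CanonicalProps (G : LGS A) (Λ : Set (ℤ → A)) : Prop :=
  G.Presents Λ ∧ G.LeftResolving ∧ G.PredSeparated ∧ G.IotaIrred ∧ G.LambdaSyncSys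

end LGS

/-!
A vertex `v` of level `l` in a left-resolving, predecessor-separated, `λ`-synchronizing
presentation of `Λ` launches some word `z`; then `z` is `l`-synchronizing and the predecessor
set of `v` is `Γ_l^-(z)`, i.e. the vertex `[z]_l` of `𝔏^{λ(Λ)}`. Sending `v` to its predecessor
set and an edge to its label and the image of its terminal is an isomorphism onto `𝔏^{λ(Λ)}`:
injective by predecessor separation and left resolution, surjective because every admissible
word leaves a vertex at every level (the local property lets paths move up and down along `ι`)
and can be extended to a word that vertex launches. Compatibility with `ι` is again the local
property. Conversely `𝔏^{λ(Λ)}` has all these properties; its `ι`-irreducibility comes from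
irreducibility of `Λ` together with `λ`-synchronization.
-/

theorem nonempty_of_natCard_eq {α β : Type*} [Finite α] (h : Nat.card α = Nat.card β) (a : α) :
    Nonempty β := by
  have : Nonempty α := ⟨a⟩
  exact (Nat.card_pos_iff.1 (h ▸ Nat.card_pos)).1

theorem natCard_eq_of_nonempty_iff {α β : Type*} [Subsingleton α] [Subsingleton β]
    (h : Nonempty α ↔ Nonempty β) : Nat.card α = Nat.card β :=
  Nat.card_congr (equivOfSubsingletonOfSubsingleton (fun a => (h.1 ⟨a⟩).some)
    fun b => (h.2 ⟨b⟩).some)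

section Words

variable {Λ : Set (ℤ → A)}

theorem Adm.of_isInfix {u v : List A} (huv : u <:+: v) (h : Adm Λ v) : Adm Λ u := by
  obtain ⟨s, t, rfl⟩ := huv
  obtain ⟨x, hx, n, hn⟩ := h
  refine ⟨x, hx, n + s.length, fun i => ?_⟩
  have := hn ⟨s.length + i, by simp only [List.append_assoc, List.length_append]; omega⟩
  simp only [List.get_eq_getElem, List.append_assoc] at this ⊢
  rw [List.getElem_append_right (by simp), List.getElem_append_left (by simp)] at this
  simpa [add_assoc] using this

theorem Adm.of_append_left {u v : List A} (h : Adm Λ (u ++ v)) : Adm Λ u :=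
  h.of_isInfix (List.infix_append_left ..)

theorem Adm.of_append_right {u v : List A} (h : Adm Λ (u ++ v)) : Adm Λ v :=
  h.of_isInfix (List.infix_append_right ..)

theorem Adm.of_cons {a : A} {w : List A} (h : Adm Λ (a :: w)) : Adm Λ w :=
  Adm.of_append_right (u := [a]) h

theorem Adm.exists_extend_left {w : List A} (h : Adm Λ w) (m : ℕ) :
    ∃ ξ : List A, ξ.length = m ∧ Adm Λ (ξ ++ w) := by
  obtain ⟨x, hx, n, hn⟩ := h
  refine ⟨List.ofFn fun i : Fin m => x (n - m + i), by simp, x, hx, n - m, fun i => ?_⟩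
  simp only [List.get_eq_getElem]
  rcases lt_or_ge (i : ℕ) m with hlt | hge
  · rw [List.getElem_append_left (by simpa using hlt), List.getElem_ofFn]
  · rw [List.getElem_append_right (by simpa using hge)]
    have hi := i.isLt
    simp only [List.length_append, List.length_ofFn] at hi
    have := hn ⟨i - m, by omega⟩
    simp only [List.get_eq_getElem, List.length_ofFn] at this ⊢
    rw [← this]
    congr 1
    push_cast [hge]
    ring

theorem Adm.exists_cons {w : List A} (h : Adm Λ w) : ∃ a : A, Adm Λ (a :: w) := by
  obtain ⟨ξ, hlen, hadm⟩ := h.exists_extend_left 1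
  obtain ⟨a, rfl⟩ := List.length_eq_one_iff.1 hlen
  exact ⟨a, hadm⟩

theorem gamma_append_subset {l : ℕ} {μ ω : List A} : Gamma Λ l (μ ++ ω) ⊆ Gamma Λ l μ :=
  fun _ ⟨hlen, hadm, hcat⟩ => ⟨hlen, hadm, (List.append_assoc .. ▸ hcat).of_append_left⟩

theorem LSync.adm {l : ℕ} {μ : List A} (h : LSync Λ l μ) : Adm Λ μ := h.1

theorem LSync.gamma_append {l : ℕ} {μ ω : List A} (h : LSync Λ l μ) (hω : Adm Λ (μ ++ ω)) :
    Gamma Λ l μ = Gamma Λ l (μ ++ ω) :=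
  h.2 ω hω

theorem lSync_of_gamma_subset {l : ℕ} {μ : List A} (hμ : Adm Λ μ)
    (h : ∀ ω, Adm Λ (μ ++ ω) → Gamma Λ l μ ⊆ Gamma Λ l (μ ++ ω)) : LSync Λ l μ :=
  ⟨hμ, fun ω hω => (h ω hω).antisymm gamma_append_subset⟩

theorem LSync.mono {k l : ℕ} {μ : List A} (hle : l ≤ k) (h : LSync Λ k μ) : LSync Λ l μ := by
  refine lSync_of_gamma_subset h.adm fun ω hω ξ ⟨hlen, hadm, hcat⟩ => ⟨hlen, hadm, ?_⟩
  obtain ⟨ζ, hζ, hζξμ⟩ := hcat.exists_extend_left (k - l)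
  rw [← List.append_assoc] at hζξμ
  have hmem : ζ ++ ξ ∈ Gamma Λ k μ :=
    ⟨by simp only [List.length_append]; omega, hζξμ.of_append_left, hζξμ⟩
  rw [h.gamma_append hω] at hmem
  exact (List.append_assoc .. ▸ hmem.2.2).of_append_right

theorem LSync.append_left {l : ℕ} {ρ ν : List A} (h : LSync Λ (l + ρ.length) ν)
    (hadm : Adm Λ (ρ ++ ν)) : LSync Λ l (ρ ++ ν) := by
  refine lSync_of_gamma_subset hadm fun ω hω ξ ⟨hlen, hξ, hcat⟩ => ⟨hlen, hξ, ?_⟩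
  rw [List.append_assoc] at hω
  rw [← List.append_assoc] at hcat
  have hmem : ξ ++ ρ ∈ Gamma Λ (l + ρ.length) ν := ⟨by simp [hlen], hcat.of_append_left, hcat⟩
  rw [h.gamma_append hω.of_append_right] at hmem
  simpa using hmem.2.2

theorem LSync.cons {l : ℕ} {α : A} {ν : List A} (h : LSync Λ (l + 1) ν)
    (hadm : Adm Λ (α :: ν)) : LSync Λ l (α :: ν) :=
  LSync.append_left (ρ := [α]) h hadm

theorem LambdaSync.exists_lSync_append (hls : LambdaSync Λ) {η : List A} (hη : Adm Λ η)
    (m : ℕ) : ∃ ν : List A, LSync Λ (m + η.length) ν ∧ LSync Λ m (η ++ ν) := by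
  obtain ⟨ν, hν, hην⟩ := hls.2 η (m + η.length) hη (Nat.le_add_left ..)
  exact ⟨ν, hν, by simpa using hην⟩

theorem adm_cons_of_gamma_eq {l : ℕ} {ν ν' : List A}
    (hg : Gamma Λ (l + 1) ν = Gamma Λ (l + 1) ν') {α : A} (h : Adm Λ (α :: ν)) :
    Adm Λ (α :: ν') := by
  obtain ⟨ξ, hlen, hadm⟩ := h.exists_extend_left l
  rw [List.append_cons] at hadm
  have hmem : ξ ++ [α] ∈ Gamma Λ (l + 1) ν := ⟨by simp [hlen], hadm.of_append_left, hadm⟩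
  rw [hg] at hmem
  exact (by simpa using hmem.2.2 : Adm Λ (ξ ++ α :: ν')).of_append_right

/-- On predecessor sets, `ι` forgets the first letter, and an edge labeled `α` into a vertex with
predecessor set `S` starts at a vertex with predecessor set `srcSet Λ l α S`. -/
def iotaSet (l : ℕ) (S : Set (List A)) : Set (List A) :=
  {ξ | ξ.length = l ∧ ∃ a : A, a :: ξ ∈ S}

theorem iotaSet_gamma {l : ℕ} {μ : List A} :
    iotaSet l (Gamma Λ (l + 1) μ) = Gamma Λ l μ := by
  ext ξ
  constructor
  · rintro ⟨hlen, a, -, hadm, hcat⟩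
    exact ⟨hlen, hadm.of_cons, Adm.of_cons (a := a) hcat⟩
  · rintro ⟨hlen, hadm, hcat⟩
    obtain ⟨a, ha⟩ := hcat.exists_cons
    exact ⟨hlen, a, by simp [hlen], Adm.of_append_left (v := μ) ha, ha⟩

def srcSet (Λ : Set (ℤ → A)) (l : ℕ) (α : A) (S : Set (List A)) : Set (List A) :=
  {ξ | ξ.length = l ∧ Adm Λ ξ ∧ ξ ++ [α] ∈ S}

theorem srcSet_gamma {l : ℕ} {ν : List A} {α : A} :
    srcSet Λ l α (Gamma Λ (l + 1) ν) = Gamma Λ l (α :: ν) := by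
  ext ξ
  simp only [srcSet, Gamma, Set.mem_ofPred_eq, List.length_append, List.length_singleton,
    List.append_assoc, List.singleton_append]
  constructor
  · rintro ⟨hlen, hadm, -, -, hcat⟩
    exact ⟨hlen, hadm, hcat⟩
  · rintro ⟨hlen, hadm, hcat⟩
    exact ⟨hlen, hadm, by omega, (List.append_cons .. ▸ hcat).of_append_left, hcat⟩

theorem gamma_cons_of_gamma_eq {l : ℕ} {ν ν' : List A}
    (hg : Gamma Λ (l + 1) ν = Gamma Λ (l + 1) ν') (α : A) :
    Gamma Λ l (α :: ν) = Gamma Λ l (α :: ν') := by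
  rw [← srcSet_gamma, ← srcSet_gamma, hg]

end Words

namespace LGS

variable {G : LGS A}

theorem pathW_nil (l : ℕ) (v : G.V l) : G.PathW l v [] l v := ⟨rfl, rfl⟩

theorem PathW.eq_of_nil {l : ℕ} {v u : G.V l} (h : G.PathW l v [] l u) : v = u := h.2

theorem PathW.level_eq {w : List A} {l l' : ℕ} {v : G.V l} {u : G.V l'}
    (h : G.PathW l v w l' u) : l' = l + w.length := by
  induction w generalizing l v with
  | nil => exact h.1.symm
  | cons a w ih =>
    obtain ⟨e, -, -, hp⟩ := h
    simp only [ih hp, List.length_cons]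
    omega

theorem PathW.append {w₁ w₂ : List A} {l l' l'' : ℕ} {v : G.V l} {u : G.V l'} {t : G.V l''}
    (h₁ : G.PathW l v w₁ l' u) (h₂ : G.PathW l' u w₂ l'' t) : G.PathW l v (w₁ ++ w₂) l'' t := by
  induction w₁ generalizing l v with
  | nil =>
    obtain ⟨rfl, rfl⟩ := h₁
    exact h₂
  | cons a w ih =>
    obtain ⟨e, hs, hl, hp⟩ := h₁
    exact ⟨e, hs, hl, ih hp⟩

theorem PathW.exists_of_append {w₁ w₂ : List A} {l l'' : ℕ} {v : G.V l} {t : G.V l''}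
    (h : G.PathW l v (w₁ ++ w₂) l'' t) :
    ∃ (l' : ℕ) (u : G.V l'), G.PathW l v w₁ l' u ∧ G.PathW l' u w₂ l'' t := by
  induction w₁ generalizing l v with
  | nil => exact ⟨l, v, pathW_nil l v, h⟩
  | cons a w ih =>
    obtain ⟨e, hs, hl, hp⟩ := h
    obtain ⟨l', u, h₁, h₂⟩ := ih hp
    exact ⟨l', u, ⟨e, hs, hl, h₁⟩, h₂⟩

theorem LeftResolving.src_eq_of_pathW (hlr : G.LeftResolving) {w : List A} {l l' : ℕ}
    {v v' : G.V l} {u : G.V l'} (h : G.PathW l v w l' u) (h' : G.PathW l v' w l' u) :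
    v = v' := by
  induction w generalizing l with
  | nil =>
    obtain ⟨rfl, rfl⟩ := h
    exact h'.eq_of_nil.symm
  | cons a w ih =>
    obtain ⟨e, rfl, hl, hp⟩ := h
    obtain ⟨e', rfl, hl', hp'⟩ := h'
    rw [hlr l e e' (hl.trans hl'.symm) (ih hp hp')]

theorem exists_edge_below {l : ℕ} (e : G.E (l + 1)) :
    ∃ f : G.E l, G.src l f = G.iota l (G.src (l + 1) e) ∧
      G.tgt l f = G.iota (l + 1) (G.tgt (l + 1) e) ∧ G.lab l f = G.lab (l + 1) e := by
  have := G.finE (l + 1)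
  obtain ⟨f, hf⟩ := nonempty_of_natCard_eq
    (G.local_property l (G.iota l (G.src (l + 1) e)) (G.tgt (l + 1) e) (G.lab (l + 1) e))
    ⟨e, rfl, rfl, rfl⟩
  exact ⟨f, hf⟩

theorem exists_edge_above {l : ℕ} (f : G.E l) (v : G.V (l + 2))
    (hv : G.iota (l + 1) v = G.tgt l f) :
    ∃ e : G.E (l + 1), G.tgt (l + 1) e = v ∧
      G.iota l (G.src (l + 1) e) = G.src l f ∧ G.lab (l + 1) e = G.lab l f := by
  have := G.finE l
  obtain ⟨e, he⟩ := nonempty_of_natCard_eq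
    (G.local_property l (G.src l f) v (G.lab l f)).symm ⟨f, rfl, hv.symm, rfl⟩
  exact ⟨e, he⟩

theorem PathW.iota {w : List A} {l l' : ℕ} {v : G.V (l + 1)} {u : G.V (l' + 1)}
    (h : G.PathW (l + 1) v w (l' + 1) u) : G.PathW l (G.iota l v) w l' (G.iota l' u) := by
  induction w generalizing l with
  | nil =>
    obtain ⟨hl, rfl⟩ := h
    obtain rfl : l = l' := by omega
    exact pathW_nil _ _
  | cons a w ih =>
    obtain ⟨e, rfl, rfl, hp⟩ := h
    obtain ⟨f, hfs, hft, hfl⟩ := exists_edge_below e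
    exact ⟨f, hfs, hfl, hft ▸ ih hp⟩

theorem PathW.exists_lift {w : List A} {l l' : ℕ} {v : G.V l} {u : G.V l'}
    (h : G.PathW l v w l' u) (u' : G.V (l' + 1)) (hu' : G.iota l' u' = u) :
    ∃ v' : G.V (l + 1), G.iota l v' = v ∧ G.PathW (l + 1) v' w (l' + 1) u' := by
  induction w generalizing l v with
  | nil =>
    obtain ⟨rfl, rfl⟩ := h
    exact ⟨u', hu', pathW_nil _ _⟩
  | cons a w ih =>
    obtain ⟨f, rfl, rfl, hp⟩ := h
    obtain ⟨t', ht', hp'⟩ := ih hp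
    obtain ⟨e, het, hes, hel⟩ := exists_edge_above f t' ht'
    exact ⟨G.src (l + 1) e, hes, e, rfl, hel, het ▸ hp'⟩

theorem Leaves.of_append {l : ℕ} {v : G.V l} {w₁ w₂ : List A} (h : G.Leaves l v (w₁ ++ w₂)) :
    G.Leaves l v w₁ := by
  obtain ⟨l'', t, hp⟩ := h
  obtain ⟨l', u, hp₁, -⟩ := hp.exists_of_append
  exact ⟨l', u, hp₁⟩

theorem exists_leaves_succ_iff (l : ℕ) (z : List A) :
    (∃ v : G.V (l + 1), G.Leaves (l + 1) v z) ↔ ∃ v : G.V l, G.Leaves l v z := by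
  constructor
  · rintro ⟨v, l', u, hp⟩
    obtain rfl : l' = l + z.length + 1 := by rw [hp.level_eq]; omega
    exact ⟨G.iota l v, _, _, hp.iota⟩
  · rintro ⟨v, l', u, hp⟩
    obtain ⟨u', hu'⟩ := G.iota_surj l' u
    obtain ⟨v', -, hp'⟩ := hp.exists_lift u' hu'
    exact ⟨v', _, _, hp'⟩

theorem exists_leaves_iff_zero (l : ℕ) (z : List A) :
    (∃ v : G.V l, G.Leaves l v z) ↔ ∃ v : G.V 0, G.Leaves 0 v z := by
  induction l with
  | zero => rfl
  | succ l ih => exact (exists_leaves_succ_iff l z).trans ih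

theorem Presents.adm_of_leaves {Λ : Set (ℤ → A)} (hpres : G.Presents Λ) {l : ℕ} {v : G.V l}
    {z : List A} (h : G.Leaves l v z) : Adm Λ z := by
  obtain ⟨l', u, hp⟩ := h
  exact (hpres z).2 ⟨l, v, l', u, hp⟩

theorem Presents.exists_leaves {Λ : Set (ℤ → A)} (hpres : G.Presents Λ) {z : List A}
    (hz : Adm Λ z) (l : ℕ) : ∃ v : G.V l, G.Leaves l v z := by
  obtain ⟨m, v, m', u, hp⟩ := (hpres z).1 hz
  exact (exists_leaves_iff_zero l z).2 ((exists_leaves_iff_zero m z).1 ⟨v, m', u, hp⟩)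

structure Iso (G G' : LGS A) where
  vert : ∀ l, G.V l ≃ G'.V l
  edge : ∀ l, G.E l ≃ G'.E l
  src_edge : ∀ l e, G'.src l (edge l e) = vert l (G.src l e)
  tgt_edge : ∀ l e, G'.tgt l (edge l e) = vert (l + 1) (G.tgt l e)
  lab_edge : ∀ l e, G'.lab l (edge l e) = G.lab l e
  iota_vert : ∀ l v, G'.iota l (vert (l + 1) v) = vert l (G.iota l v)

namespace Iso

variable {G' G'' : LGS A}

theorem isomorphic (φ : G.Iso G') : G.Isomorphic G' :=
  ⟨φ.vert, φ.edge, φ.src_edge, φ.tgt_edge, φ.lab_edge, φ.iota_vert⟩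

def symm (φ : G.Iso G') : G'.Iso G where
  vert l := (φ.vert l).symm
  edge l := (φ.edge l).symm
  src_edge l e := by rw [Equiv.eq_symm_apply, ← φ.src_edge, Equiv.apply_symm_apply]
  tgt_edge l e := by rw [Equiv.eq_symm_apply, ← φ.tgt_edge, Equiv.apply_symm_apply]
  lab_edge l e := by rw [← φ.lab_edge, Equiv.apply_symm_apply]
  iota_vert l v := by rw [Equiv.eq_symm_apply, ← φ.iota_vert, Equiv.apply_symm_apply]

def trans (φ : G.Iso G') (ψ : G'.Iso G'') : G.Iso G'' where
  vert l := (φ.vert l).trans (ψ.vert l)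
  edge l := (φ.edge l).trans (ψ.edge l)
  src_edge l e := by rw [Equiv.trans_apply, Equiv.trans_apply, ψ.src_edge, φ.src_edge]
  tgt_edge l e := by rw [Equiv.trans_apply, Equiv.trans_apply, ψ.tgt_edge, φ.tgt_edge]
  lab_edge l e := by rw [Equiv.trans_apply, ψ.lab_edge, φ.lab_edge]
  iota_vert l v := by rw [Equiv.trans_apply, Equiv.trans_apply, ψ.iota_vert, φ.iota_vert]

theorem forall_vert (φ : G.Iso G') {l : ℕ} {p : G'.V l → Prop} : (∀ v, p v) ↔ ∀ v, p (φ.vert l v) :=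
  (φ.vert l).surjective.forall

theorem exists_vert (φ : G.Iso G') {l : ℕ} {p : G'.V l → Prop} : (∃ v, p v) ↔ ∃ v, p (φ.vert l v) :=
  (φ.vert l).surjective.exists

theorem forall_edge (φ : G.Iso G') {l : ℕ} {p : G'.E l → Prop} : (∀ e, p e) ↔ ∀ e, p (φ.edge l e) :=
  (φ.edge l).surjective.forall

theorem pathW_iff (φ : G.Iso G') {w : List A} {l l' : ℕ} {v : G.V l} {u : G.V l'} :
    G'.PathW l (φ.vert l v) w l' (φ.vert l' u) ↔ G.PathW l v w l' u := by
  induction w generalizing l v with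
  | nil =>
    constructor <;> rintro ⟨rfl, h⟩
    · exact ⟨rfl, (φ.vert l).injective h⟩
    · exact ⟨rfl, congrArg (φ.vert l) h⟩
  | cons a w ih =>
    refine ((φ.edge l).symm.exists_congr_left).trans (exists_congr fun e => ?_)
    simp only [Equiv.symm_symm, φ.src_edge, φ.lab_edge, φ.tgt_edge,
      EmbeddingLike.apply_eq_iff_eq, ih]

theorem leaves_iff (φ : G.Iso G') {l : ℕ} {v : G.V l} {z : List A} :
    G'.Leaves l (φ.vert l v) z ↔ G.Leaves l v z := by
  simp only [Leaves, φ.exists_vert, φ.pathW_iff]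

theorem predSet (φ : G.Iso G') (l : ℕ) (v : G.V l) : G'.PredSet l (φ.vert l v) = G.PredSet l v := by
  simp only [PredSet, φ.exists_vert, φ.pathW_iff]

theorem iotaN (φ : G.Iso G') (l n : ℕ) (v : G.V (l + n)) :
    G'.iotaN l n (φ.vert (l + n) v) = φ.vert l (G.iotaN l n v) := by
  induction n with
  | zero => rfl
  | succ n ih => exact (congrArg (G'.iotaN l n) (φ.iota_vert (l + n) v)).trans (ih _)

theorem canonicalProps (φ : G.Iso G') {Λ : Set (ℤ → A)} (hG : G.CanonicalProps Λ) :
    G'.CanonicalProps Λ := by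
  simpa only [CanonicalProps, Presents, LeftResolving, PredSeparated, IotaIrred, LambdaSyncSys,
    Launches, φ.forall_vert, φ.exists_vert, φ.forall_edge, φ.pathW_iff, φ.leaves_iff, φ.predSet,
    φ.iotaN, φ.lab_edge, φ.tgt_edge, EmbeddingLike.apply_eq_iff_eq] using hG

end Iso

def transport (G : LGS A) {V' E' : ℕ → Type*} (eV : ∀ l, G.V l ≃ V' l)
    (eE : ∀ l, G.E l ≃ E' l) : LGS A where
  V := V'
  E := E'
  finV l := have := G.finV l; Finite.of_equiv _ (eV l)
  finE l := have := G.finE l; Finite.of_equiv _ (eE l)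
  src l e := eV l (G.src l ((eE l).symm e))
  tgt l e := eV (l + 1) (G.tgt l ((eE l).symm e))
  lab l e := G.lab l ((eE l).symm e)
  iota l v := eV l (G.iota l ((eV (l + 1)).symm v))
  iota_surj l := (eV l).surjective.comp ((G.iota_surj l).comp (eV (l + 1)).symm.surjective)
  succ l v := by
    obtain ⟨e, he⟩ := G.succ l ((eV l).symm v)
    exact ⟨eE l e, by simp [he]⟩
  pred l v := by
    obtain ⟨e, he⟩ := G.pred l ((eV (l + 1)).symm v)
    exact ⟨eE l e, by simp [he]⟩
  local_property l u v α := by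
    refine (Nat.card_congr ((eE (l + 1)).symm.subtypeEquiv fun e => ?_)).trans
      ((G.local_property l ((eV l).symm u) ((eV (l + 2)).symm v) α).trans
        (Nat.card_congr ((eE l).symm.subtypeEquiv fun e => ?_)).symm) <;>
    simp [Equiv.eq_symm_apply]

def transportIso (G : LGS A) {V' E' : ℕ → Type*} (eV : ∀ l, G.V l ≃ V' l)
    (eE : ∀ l, G.E l ≃ E' l) : G.Iso (G.transport eV eE) where
  vert := eV
  edge := eE
  src_edge l e := congrArg (eV l ∘ G.src l) ((eE l).symm_apply_apply e)
  tgt_edge l e := congrArg (eV (l + 1) ∘ G.tgt l) ((eE l).symm_apply_apply e)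
  lab_edge l e := congrArg (G.lab l) ((eE l).symm_apply_apply e)
  iota_vert l v := congrArg (eV l ∘ G.iota l) ((eV (l + 1)).symm_apply_apply v)

universe v w

/-- A copy of `G` with vertices and edges in arbitrary universes; `canLGS` itself lives in the
universe of the alphabet. -/
noncomputable def finCopy (G : LGS A) : LGS.{_, v, w} A :=
  G.transport (fun l => have := G.finV l; (Finite.equivFin _).trans Equiv.ulift.symm)
    (fun l => have := G.finE l; (Finite.equivFin _).trans Equiv.ulift.symm)

noncomputable def isoFinCopy (G : LGS A) : G.Iso (G.finCopy : LGS.{_, v, w} A) :=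
  G.transportIso _ _

end LGS

section CanonicalConstruction

variable (Λ : Set (ℤ → A))

/-- The vertices of `𝔏^{λ(Λ)}` at level `l`: the class `[μ]_l` of an `l`-synchronizing word
is represented by the set `Γ_l^-(μ)` that defines it. -/
def CanV (l : ℕ) : Type _ :=
  {S : Set (List A) // ∃ μ, LSync Λ l μ ∧ S = Gamma Λ l μ}

/-- The edges `[αν]_l → [ν]_{l+1}` labeled `α` of `𝔏^{λ(Λ)}`, recorded by label and terminal. -/
def CanE (l : ℕ) : Type _ :=
  {p : A × CanV Λ (l + 1) //
    ∃ ν, LSync Λ (l + 1) ν ∧ p.2.1 = Gamma Λ (l + 1) ν ∧ Adm Λ (p.1 :: ν)}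

variable {Λ}

def CanV.of {l : ℕ} {μ : List A} (hμ : LSync Λ l μ) : CanV Λ l :=
  ⟨Gamma Λ l μ, μ, hμ, rfl⟩

theorem CanV.exists_eq_of {l : ℕ} (v : CanV Λ l) : ∃ μ, ∃ hμ : LSync Λ l μ, v = CanV.of hμ := by
  obtain ⟨_, μ, hμ, rfl⟩ := v
  exact ⟨μ, hμ, rfl⟩

theorem CanV.of_eq_of_iff {l : ℕ} {μ ν : List A} {hμ : LSync Λ l μ} {hν : LSync Λ l ν} :
    CanV.of hμ = CanV.of hν ↔ Gamma Λ l μ = Gamma Λ l ν :=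
  Subtype.ext_iff

theorem CanV.of_eq_of_prefix {l : ℕ} {μ ν : List A} (hμ : LSync Λ l μ) (hν : LSync Λ l ν)
    (h : μ <+: ν) : CanV.of hν = CanV.of hμ := by
  obtain ⟨ω, rfl⟩ := h
  exact CanV.of_eq_of_iff.2 (hμ.gamma_append hν.adm).symm

instance [Finite A] (l : ℕ) : Finite (CanV Λ l) := by
  have := ((List.finite_length_eq A l).finite_subsets).to_subtype
  have hsub (v : CanV Λ l) : v.1 ⊆ {w | w.length = l} := by
    obtain ⟨μ, -, hv⟩ := v.2
    exact hv ▸ fun w hw => hw.1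
  exact Finite.of_injective (fun v => (⟨v.1, hsub v⟩ : {S | S ⊆ {w : List A | w.length = l}}))
    fun v v' h => Subtype.ext (Subtype.mk.inj h)

instance [Finite A] (l : ℕ) : Finite (CanE Λ l) :=
  Subtype.finite

def CanE.of {l : ℕ} {α : A} {ν : List A} (hν : LSync Λ (l + 1) ν) (hadm : Adm Λ (α :: ν)) :
    CanE Λ l :=
  ⟨(α, CanV.of hν), ν, hν, rfl, hadm⟩

theorem CanE.exists_eq_of {l : ℕ} (e : CanE Λ l) :
    ∃ (α : A) (ν : List A) (hν : LSync Λ (l + 1) ν) (hadm : Adm Λ (α :: ν)),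
      e = CanE.of hν hadm := by
  obtain ⟨⟨α, _⟩, ν, hν, hv, hadm⟩ := e
  exact ⟨α, ν, hν, hadm, Subtype.ext (Prod.ext rfl (Subtype.ext hv))⟩

theorem CanE.ext {l : ℕ} {e f : CanE Λ l} (hlab : e.1.1 = f.1.1) (htgt : e.1.2 = f.1.2) :
    e = f :=
  Subtype.ext (Prod.ext hlab htgt)

def canSrc {l : ℕ} (e : CanE Λ l) : CanV Λ l :=
  ⟨srcSet Λ l e.1.1 e.1.2.1, by
    obtain ⟨ν, hν, hv, hadm⟩ := e.2
    exact ⟨_, hν.cons hadm, hv ▸ srcSet_gamma⟩⟩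

theorem canSrc_of {l : ℕ} {α : A} {ν : List A} (hν : LSync Λ (l + 1) ν)
    (hadm : Adm Λ (α :: ν)) : canSrc (CanE.of hν hadm) = CanV.of (hν.cons hadm) :=
  Subtype.ext srcSet_gamma

def canIota {l : ℕ} (v : CanV Λ (l + 1)) : CanV Λ l :=
  ⟨iotaSet l v.1, by
    obtain ⟨μ, hμ, rfl⟩ := v.exists_eq_of
    exact ⟨μ, hμ.mono l.le_succ, iotaSet_gamma⟩⟩

theorem canIota_of {l : ℕ} {μ : List A} (hμ : LSync Λ (l + 1) μ) :
    canIota (CanV.of hμ) = CanV.of (hμ.mono l.le_succ) :=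
  Subtype.ext iotaSet_gamma

theorem canIota_surjective (hls : LambdaSync Λ) (l : ℕ) :
    Function.Surjective (canIota (Λ := Λ) (l := l)) := by
  intro v
  obtain ⟨μ, hμ, rfl⟩ := v.exists_eq_of
  obtain ⟨ν, -, hμν⟩ := hls.exists_lSync_append hμ.adm (l + 1)
  exact ⟨CanV.of hμν,
    (canIota_of hμν).trans (CanV.of_eq_of_prefix hμ _ (List.prefix_append ..))⟩

theorem exists_canSrc_eq (hls : LambdaSync Λ) {l : ℕ} (v : CanV Λ l) :
    ∃ e : CanE Λ l, canSrc e = v := by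
  obtain ⟨μ, hμ, rfl⟩ := v.exists_eq_of
  cases μ with
  | nil =>
    obtain ⟨a, ha⟩ := hμ.adm.exists_cons
    obtain ⟨ν, hν, haν⟩ := hls.exists_lSync_append ha (l + 1)
    exact ⟨CanE.of (hν.mono (by simp)) haν.adm,
      (canSrc_of _ _).trans (CanV.of_eq_of_prefix hμ _ List.nil_prefix)⟩
  | cons α t =>
    obtain ⟨ν, hν, hμν⟩ := hls.exists_lSync_append hμ.adm (l + 1)
    have htν : LSync Λ (l + 1) (t ++ ν) :=
      (hν.mono (by simp)).append_left hμν.adm.of_cons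
    exact ⟨CanE.of htν hμν.adm,
      (canSrc_of _ _).trans (CanV.of_eq_of_prefix hμ _ (List.prefix_append ..))⟩

theorem canLocalProperty (l : ℕ) (u : CanV Λ l) (v : CanV Λ (l + 2)) (α : A) :
    Nat.card {e : CanE Λ (l + 1) // e.1.2 = v ∧ canIota (canSrc e) = u ∧ e.1.1 = α} =
      Nat.card {f : CanE Λ l // canSrc f = u ∧ f.1.2 = canIota v ∧ f.1.1 = α} := by
  have : Subsingleton {e : CanE Λ (l + 1) // e.1.2 = v ∧ canIota (canSrc e) = u ∧ e.1.1 = α} :=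
    ⟨fun ⟨_, he⟩ ⟨_, he'⟩ => Subtype.ext (CanE.ext (he.2.2.trans he'.2.2.symm)
      (he.1.trans he'.1.symm))⟩
  have : Subsingleton {f : CanE Λ l // canSrc f = u ∧ f.1.2 = canIota v ∧ f.1.1 = α} :=
    ⟨fun ⟨_, hf⟩ ⟨_, hf'⟩ => Subtype.ext (CanE.ext (hf.2.2.trans hf'.2.2.symm)
      (hf.2.1.trans hf'.2.1.symm))⟩
  refine natCard_eq_of_nonempty_iff ⟨fun ⟨e, he⟩ => ?_, fun ⟨f, hf⟩ => ?_⟩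
  · obtain ⟨β, ν, hν, hadm, rfl⟩ := e.exists_eq_of
    obtain ⟨rfl, rfl, rfl⟩ := he
    refine ⟨CanE.of (hν.mono (l + 1).le_succ) hadm, ?_, canIota_of hν |>.symm, rfl⟩
    rw [canSrc_of, canSrc_of, canIota_of]
  · obtain ⟨β, ν₂, hν₂, hadm₂, rfl⟩ := f.exists_eq_of
    obtain ⟨ν, hν, rfl⟩ := v.exists_eq_of
    obtain ⟨rfl, hιv, rfl⟩ := hf
    replace hιv : CanV.of hν₂ = canIota (CanV.of hν) := hιv
    have hg : Gamma Λ (l + 1) ν = Gamma Λ (l + 1) ν₂ :=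
      CanV.of_eq_of_iff.1 ((canIota_of hν).symm.trans hιv.symm)
    refine ⟨CanE.of hν (adm_cons_of_gamma_eq hg.symm hadm₂), rfl, ?_, rfl⟩
    rw [canSrc_of, canSrc_of, canIota_of, CanV.of_eq_of_iff]
    exact gamma_cons_of_gamma_eq hg _

end CanonicalConstruction

section CanonicalSystem

variable [Finite A] {Λ : Set (ℤ → A)} (hls : LambdaSync Λ)

/-- The canonical `λ`-synchronizing `λ`-graph system `𝔏^{λ(Λ)}`. -/
def canLGS : LGS A where
  V := CanV Λ
  E := CanE Λ
  finV _ := inferInstance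
  finE _ := inferInstance
  src _ := canSrc
  tgt _ e := e.1.2
  lab _ e := e.1.1
  iota _ := canIota
  iota_surj := canIota_surjective hls
  succ _ := exists_canSrc_eq hls
  pred _ v := by
    obtain ⟨ν, hν, rfl⟩ := v.exists_eq_of
    obtain ⟨a, ha⟩ := hν.adm.exists_cons
    exact ⟨CanE.of hν ha, rfl⟩
  local_property := canLocalProperty

theorem canLGS_pathW {w : List A} {l m : ℕ} (hm : l + w.length = m) {ν : List A}
    (hν : LSync Λ m ν) (hadm : Adm Λ (w ++ ν)) :
    (canLGS hls).PathW l (CanV.of ((hν.mono hm.le).append_left hadm)) w m (CanV.of hν) := by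
  induction w generalizing l with
  | nil =>
    obtain rfl : l = m := by simpa using hm
    exact LGS.pathW_nil _ _
  | cons a w ih =>
    have hm' : l + 1 + w.length = m := by simp only [List.length_cons] at hm; omega
    exact ⟨CanE.of ((hν.mono hm'.le).append_left hadm.of_cons) hadm, canSrc_of _ _, rfl,
      ih hm' hadm.of_cons⟩

theorem canLGS_pathW_iff {w : List A} {l m : ℕ} {v : CanV Λ l} {ν : List A}
    (hν : LSync Λ m ν) :
    (canLGS hls).PathW l v w m (CanV.of hν) ↔
      l + w.length = m ∧ Adm Λ (w ++ ν) ∧ v.1 = Gamma Λ l (w ++ ν) := by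
  refine ⟨fun hp => ?_, fun ⟨hm, hadm, hv⟩ => ?_⟩
  · induction w generalizing l with
    | nil =>
      obtain ⟨rfl, rfl⟩ := hp
      exact ⟨rfl, hν.adm, rfl⟩
    | cons a w ih =>
      obtain ⟨e, rfl, rfl, hp⟩ := hp
      obtain ⟨hm, hadm, hset⟩ := ih hp
      obtain ⟨β, ν₀, hν₀, hadm₀, rfl⟩ := e.exists_eq_of
      have hg : Gamma Λ (l + 1) ν₀ = Gamma Λ (l + 1) (w ++ ν) := hset
      refine ⟨by simp only [List.length_cons]; omega, adm_cons_of_gamma_eq hg hadm₀, ?_⟩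
      exact (congrArg Subtype.val (canSrc_of hν₀ hadm₀)).trans (gamma_cons_of_gamma_eq hg β)
  · obtain rfl : v = CanV.of ((hν.mono hm.le).append_left hadm) := Subtype.ext hv
    exact canLGS_pathW hls hm hν hadm

theorem canLGS_presents : (canLGS hls).Presents Λ := by
  intro w
  constructor
  · intro hw
    obtain ⟨ν, hν, hwν⟩ := hls.exists_lSync_append hw 0
    exact ⟨0, _, _, _, canLGS_pathW hls rfl hν hwν.adm⟩
  · rintro ⟨l, v, l', u, hp⟩
    obtain ⟨ν, hν, rfl⟩ := u.exists_eq_of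
    exact ((canLGS_pathW_iff hls hν).1 hp).2.1.of_append_left

theorem canLGS_leftResolving : (canLGS hls).LeftResolving :=
  fun _ _ _ => CanE.ext

theorem canLGS_predSet (l : ℕ) (v : CanV Λ l) : (canLGS hls).PredSet l v = v.1 := by
  obtain ⟨μ, hμ, rfl⟩ := v.exists_eq_of
  ext w
  constructor
  · rintro ⟨hlen, v₀, hp⟩
    obtain ⟨-, hadm, -⟩ := (canLGS_pathW_iff hls hμ).1 hp
    exact ⟨hlen, hadm.of_append_left, hadm⟩
  · rintro ⟨hlen, -, hadm⟩
    exact ⟨hlen, _, canLGS_pathW hls (by simpa using hlen) hμ hadm⟩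

theorem canLGS_predSeparated : (canLGS hls).PredSeparated := fun l u v h =>
  Subtype.ext ((canLGS_predSet hls l u).symm.trans (h.trans (canLGS_predSet hls l v)))

theorem canLGS_lambdaSyncSys : (canLGS hls).LambdaSyncSys := by
  intro l v
  obtain ⟨μ, hμ, rfl⟩ := v.exists_eq_of
  refine ⟨μ, ?_, fun v' ⟨l', u, hp⟩ => ?_⟩
  · obtain ⟨ν, hν, hμν⟩ := hls.exists_lSync_append hμ.adm l
    have hp := canLGS_pathW hls rfl hν hμν.adm
    rw [CanV.of_eq_of_prefix hμ _ (List.prefix_append ..)] at hp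
    exact ⟨_, _, hp⟩
  · obtain ⟨ν, hν, rfl⟩ := u.exists_eq_of
    obtain ⟨-, hadm, hv'⟩ := (canLGS_pathW_iff hls hν).1 hp
    exact Subtype.ext (hv'.trans (hμ.gamma_append hadm).symm)

theorem canLGS_iotaN {l n : ℕ} {μ : List A} (hμ : LSync Λ (l + n) μ) :
    (canLGS hls).iotaN l n (CanV.of hμ) = CanV.of (hμ.mono (Nat.le_add_right l n)) := by
  induction n with
  | zero => rfl
  | succ n ih => exact (congrArg _ (canIota_of hμ)).trans (ih _)

theorem canLGS_iotaIrred : (canLGS hls).IotaIrred := by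
  intro l v u w l' t hp
  obtain ⟨μ, hμ, rfl⟩ := v.exists_eq_of
  obtain ⟨σ, hσ, rfl⟩ := t.exists_eq_of
  obtain ⟨rfl, hwσ, hu⟩ := (canLGS_pathW_iff hls hσ).1 hp
  obtain rfl : u = CanV.of ((hσ.mono le_rfl).append_left hwσ) := Subtype.ext hu
  -- Irreducibility gives a bridge `ζ` from `μ` to `wσ`, and `λ`-synchronization a right
  -- extension `ν` synchronizing at every level the construction needs.
  obtain ⟨ζ, hμζ⟩ := hls.1 μ (w ++ σ) hμ.adm hwσ
  obtain ⟨ν, hν, hην⟩ := hls.exists_lSync_append hμζ l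
  have hadm : Adm Λ ((μ ++ ζ) ++ (w ++ (σ ++ ν))) := by simpa using hην.adm
  set n := (μ ++ ζ).length
  have hσν : LSync Λ (l + w.length + n) (σ ++ ν) :=
    (hν.mono (by simp only [List.length_append, n]; omega)).append_left
      (hadm.of_isInfix ⟨μ ++ ζ ++ w, [], by simp⟩)
  have hwσν : LSync Λ (l + n) (w ++ (σ ++ ν)) :=
    (hσν.mono (by omega)).append_left hadm.of_append_right
  refine ⟨n, μ ++ ζ, CanV.of hwσν, CanV.of hσν, ?_, ?_, canLGS_pathW hls (by omega) hσν
    hadm.of_append_right, ?_⟩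
  · have hpath := canLGS_pathW hls rfl hwσν hadm
    rwa [CanV.of_eq_of_prefix hμ _ ⟨_, (List.append_assoc ..).symm⟩] at hpath
  · rw [canLGS_iotaN]
    exact CanV.of_eq_of_prefix _ _ ⟨ν, (List.append_assoc ..)⟩
  · rw [canLGS_iotaN]
    exact CanV.of_eq_of_prefix _ _ (List.prefix_append ..)

theorem canLGS_canonicalProps : (canLGS hls).CanonicalProps Λ :=
  ⟨canLGS_presents hls, canLGS_leftResolving hls, canLGS_predSeparated hls,
    canLGS_iotaIrred hls, canLGS_lambdaSyncSys hls⟩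

end CanonicalSystem

namespace LGS

variable {Λ : Set (ℤ → A)} {G : LGS A}

theorem Presents.predSet_eq_gamma (hpres : G.Presents Λ) {l : ℕ} {v : G.V l} {z : List A}
    (hz : G.Launches l v z) : G.PredSet l v = Gamma Λ l z := by
  ext w
  constructor
  · rintro ⟨hlen, v₀, hp⟩
    obtain ⟨l', u, hq⟩ := hz.1
    exact ⟨hlen, (hpres w).2 ⟨0, v₀, l, v, hp⟩, (hpres _).2 ⟨0, v₀, l', u, hp.append hq⟩⟩
  · rintro ⟨hlen, -, hwz⟩
    obtain ⟨v₀, l'', t, hp⟩ := hpres.exists_leaves hwz 0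
    obtain ⟨m, u, hp₁, hp₂⟩ := hp.exists_of_append
    obtain rfl : m = l := by rw [hp₁.level_eq]; simp [hlen]
    obtain rfl := hz.2 u ⟨l'', t, hp₂⟩
    exact ⟨hlen, v₀, hp₁⟩

theorem Presents.launches_append (hpres : G.Presents Λ) {l : ℕ} {v : G.V l} {z ω : List A}
    (hz : G.Launches l v z) (hω : Adm Λ (z ++ ω)) : G.Launches l v (z ++ ω) := by
  obtain ⟨v', hv'⟩ := hpres.exists_leaves hω l
  obtain rfl := hz.2 v' hv'.of_append
  exact ⟨hv', fun v'' hv'' => hz.2 v'' hv''.of_append⟩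

theorem Presents.lSync_of_launches (hpres : G.Presents Λ) {l : ℕ} {v : G.V l} {z : List A}
    (hz : G.Launches l v z) : LSync Λ l z := by
  refine ⟨hpres.adm_of_leaves hz.1, fun ω hω => ?_⟩
  rw [← hpres.predSet_eq_gamma hz, ← hpres.predSet_eq_gamma (hpres.launches_append hz hω)]

/-- `ω` is any word launched by the end of a path labeled `μ` from `v`; left resolution makes
`v` the only start of such a path. -/
theorem LambdaSyncSys.exists_launches_append (hsync : G.LambdaSyncSys) (hlr : G.LeftResolving)
    {l : ℕ} {v : G.V l} {μ : List A} (hμ : G.Leaves l v μ) :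
    ∃ ω : List A, G.Launches l v (μ ++ ω) := by
  obtain ⟨l', u, hp⟩ := hμ
  obtain ⟨ω, ⟨l'', t, hq⟩, hu⟩ := hsync l' u
  refine ⟨ω, ⟨l'', t, hp.append hq⟩, fun v' ⟨_, _, hp'⟩ => ?_⟩
  obtain ⟨m, u', hp₁, hp₂⟩ := hp'.exists_of_append
  obtain rfl : m = l' := by rw [hp₁.level_eq, hp.level_eq]
  obtain rfl := hu u' ⟨_, _, hp₂⟩
  exact hlr.src_eq_of_pathW hp₁ hp

theorem srcSet_predSet (hpres : G.Presents Λ) (hlr : G.LeftResolving) {l : ℕ} (e : G.E l) :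
    srcSet Λ l (G.lab l e) (G.PredSet (l + 1) (G.tgt l e)) = G.PredSet l (G.src l e) := by
  ext ξ
  constructor
  · rintro ⟨hlen, -, -, v₀, hp⟩
    obtain ⟨m, p, hp₁, f, rfl, hf, hnil⟩ := hp.exists_of_append
    obtain ⟨hm, hft⟩ := hnil
    obtain rfl : m = l := by omega
    obtain rfl := hlr m f e hf hft
    exact ⟨hlen, v₀, hp₁⟩
  · rintro ⟨hlen, v₀, hp⟩
    exact ⟨hlen, (hpres ξ).2 ⟨0, v₀, l, _, hp⟩, by simp [hlen], v₀,
      hp.append ⟨e, rfl, rfl, pathW_nil _ _⟩⟩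

theorem iotaSet_predSet (l : ℕ) (v : G.V (l + 1)) :
    iotaSet l (G.PredSet (l + 1) v) = G.PredSet l (G.iota l v) := by
  ext ξ
  constructor
  · rintro ⟨hlen, a, -, -, e, -, -, hp⟩
    exact ⟨hlen, G.iota 0 (G.tgt 0 e), hp.iota⟩
  · rintro ⟨hlen, v₀, hp⟩
    obtain ⟨v₁, -, hp'⟩ := hp.exists_lift v rfl
    obtain ⟨e, he⟩ := G.pred 0 v₁
    exact ⟨hlen, G.lab 0 e, by simp [hlen], G.src 0 e, e, rfl, rfl, he ▸ hp'⟩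

end LGS

namespace LGS.CanonicalProps

variable {Λ : Set (ℤ → A)} {G : LGS A}

def toCanV (hG : G.CanonicalProps Λ) (l : ℕ) (v : G.V l) : CanV Λ l :=
  ⟨G.PredSet l v, by
    obtain ⟨z, hz⟩ := hG.2.2.2.2 l v
    exact ⟨z, hG.1.lSync_of_launches hz, hG.1.predSet_eq_gamma hz⟩⟩

def toCanE (hG : G.CanonicalProps Λ) (l : ℕ) (e : G.E l) : CanE Λ l :=
  ⟨(G.lab l e, hG.toCanV (l + 1) (G.tgt l e)), by
    obtain ⟨z, hz⟩ := hG.2.2.2.2 (l + 1) (G.tgt l e)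
    obtain ⟨l', u, hp⟩ := hz.1
    exact ⟨z, hG.1.lSync_of_launches hz, hG.1.predSet_eq_gamma hz,
      hG.1.adm_of_leaves ⟨l', u, e, rfl, rfl, hp⟩⟩⟩

theorem toCanV_of_launches (hG : G.CanonicalProps Λ) {l : ℕ} {v : G.V l} {μ ω : List A}
    (hμ : LSync Λ l μ) (hv : G.Launches l v (μ ++ ω)) : hG.toCanV l v = CanV.of hμ :=
  Subtype.ext
    ((hG.1.predSet_eq_gamma hv).trans (hμ.gamma_append (hG.1.adm_of_leaves hv.1)).symm)

theorem toCanV_bijective (hG : G.CanonicalProps Λ) (l : ℕ) :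
    Function.Bijective (hG.toCanV l) := by
  refine ⟨fun v v' h => hG.2.2.1 l v v' (Subtype.ext_iff.1 h), fun v => ?_⟩
  obtain ⟨μ, hμ, rfl⟩ := v.exists_eq_of
  obtain ⟨p, hp⟩ := hG.1.exists_leaves hμ.adm l
  obtain ⟨ω, hω⟩ := hG.2.2.2.2.exists_launches_append hG.2.1 hp
  exact ⟨p, hG.toCanV_of_launches hμ hω⟩

theorem toCanE_bijective (hG : G.CanonicalProps Λ) (l : ℕ) :
    Function.Bijective (hG.toCanE l) := by
  refine ⟨fun e f h => hG.2.1 l e f (congrArg (·.1.1) h)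
    ((hG.toCanV_bijective (l + 1)).1 (congrArg (·.1.2) h)), fun ε => ?_⟩
  obtain ⟨α, ν, hν, hadm, rfl⟩ := ε.exists_eq_of
  obtain ⟨p, l', u, e, -, rfl, hp⟩ := hG.1.exists_leaves hadm l
  obtain ⟨ω, hω⟩ := hG.2.2.2.2.exists_launches_append hG.2.1 ⟨l', u, hp⟩
  exact ⟨e, CanE.ext rfl (hG.toCanV_of_launches hν hω)⟩

noncomputable def isoCanLGS [Finite A] (hG : G.CanonicalProps Λ) (hls : LambdaSync Λ) :
    G.Iso (canLGS hls) where
  vert l := Equiv.ofBijective _ (hG.toCanV_bijective l)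
  edge l := Equiv.ofBijective _ (hG.toCanE_bijective l)
  src_edge _ e := Subtype.ext (srcSet_predSet hG.1 hG.2.1 e)
  tgt_edge _ _ := rfl
  lab_edge _ _ := rfl
  iota_vert l v := Subtype.ext (iotaSet_predSet l v)

end LGS.CanonicalProps

theorem canonical_unique_general [Finite A]
    (Λ : Set (ℤ → A)) (hls : LambdaSync Λ) :
    (∃ G : LGS A, G.CanonicalProps Λ) ∧
    (∀ G G' : LGS A, G.CanonicalProps Λ → G'.CanonicalProps Λ → G.Isomorphic G') :=
  ⟨⟨_, (canLGS hls).isoFinCopy.canonicalProps (canLGS_canonicalProps hls)⟩,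
    fun _ _ hG hG' => ((hG.isoCanLGS hls).trans (hG'.isoCanLGS hls).symm).isomorphic⟩

/-- for a `λ`-synchronizing subshift `Λ` there exists a left-resolving,
predecessor-separated, `ι`-irreducible, `λ`-synchronizing `λ`-graph system presenting
`Λ` (namely the canonical one `𝔏^{λ(Λ)}`), and any two such are isomorphic. -/
theorem canonical_unique [TopologicalSpace A] [DiscreteTopology A] [Finite A]
    (Λ : Set (ℤ → A)) (hΛ : IsSubshift Λ) (hls : LambdaSync Λ) :
    (∃ G : LGS A, G.CanonicalProps Λ) ∧
    (∀ G G' : LGS A, G.CanonicalProps Λ → G'.CanonicalProps Λ → G.Isomorphic G') :=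
  canonical_unique_general Λ hls
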